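/- Let n ≥ 1 be a natural number, 0 ≤ ν ≤ n, λ = n − ν, κ = (n+1)/2, and let k be an odd integer. With Γ_m(s) = π^{m(m−1)/4} · ∏_{i=0}^{m−1} Γ(s − i/2), the identity Γ_ν(s − 1/2) · Γ_λ(s − (ν−1)/2 + (k−1)/2) · Γ_ν(κ − s − (λ−1)/2) · Γ_λ(κ − s − 1/2 − (k−1)/2) = (−1)^{n·(k−1)/2} · Γ_ν(s − k/2) · Γ_λ(s − (ν−1)/2) · Γ_ν(κ − s − (λ−1)/2 + (k−1)/2) · Γ_λ(κ − s − 1/2) holds for every s ∈ ℂ. (This encodes the invariance G*_ν(s) = G*_λ(κ − s) of the Gamma factor G*_ν(s) = (−1)^{ν(k−1)/2} · [Γ_ν(s − 1/2)/Γ_ν(s − k/2)] · [Γ_λ(s − (ν−1)/2 + (k−1)/2)/Γ_λ(s − (ν−1)/2)] appearing in the functional equation of the constant term of the Siegel Eisenstein series with quadratic character when p ≡ 3 mod 4.) -/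
import Mathlib


open Complex

/-- The Siegel Gamma factor `Γ_m(s) = π^{m(m-1)/4} · ∏_{i=0}^{m-1} Γ(s - i/2)`. -/
noncomputable def GammaSiegel (m : ℕ) (s : ℂ) : ℂ :=
  (Real.pi : ℂ) ^ (((m * (m - 1) : ℕ) : ℂ) / 4) *
    ∏ i ∈ Finset.range m, Complex.Gamma (s - (i : ℂ) / 2)

noncomputable def Pg (m : ℕ) (a : ℂ) : ℂ :=
  ∏ i ∈ Finset.range m, Complex.Gamma (a - (i : ℂ) / 2)

lemma GammaSiegel_eq (m : ℕ) (s : ℂ) :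
    GammaSiegel m s = (Real.pi : ℂ) ^ (((m * (m - 1) : ℕ) : ℂ) / 4) * Pg m s := rfl

lemma Pg_congr (m : ℕ) {a b : ℂ} (h : a = b) : Pg m a = Pg m b := by rw [h]

/-- Shifted reflection: `Γ(a+t) Γ(1-a-t) = (-1)^t Γ(a) Γ(1-a)` for integer `t`. -/
lemma gamma_pair (a : ℂ) (t : ℤ) :
    Complex.Gamma (a + t) * Complex.Gamma (1 - a - t) =
      (-1 : ℂ) ^ t * (Complex.Gamma a * Complex.Gamma (1 - a)) := by
  have h1 := Complex.Gamma_mul_Gamma_one_sub (a + t)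
  have h2 := Complex.Gamma_mul_Gamma_one_sub a
  rw [show (1 : ℂ) - (a + t) = 1 - a - t by ring] at h1
  rw [h1, h2]
  have hsin : Complex.sin (↑Real.pi * (a + t)) = (-1 : ℂ) ^ t * Complex.sin (↑Real.pi * a) := by
    rw [show (↑Real.pi : ℂ) * (a + t) = ↑Real.pi * a + (t : ℂ) * ↑Real.pi by ring,
      Complex.sin_antiperiodic.add_int_mul_eq t, Int.cast_negOnePow ℂ t]
  rw [hsin]
  have hsq : ((-1 : ℂ) ^ t) * ((-1 : ℂ) ^ t) = 1 := by
    rw [← zpow_add₀ (by norm_num : (-1 : ℂ) ≠ 0), show t + t = 2 * t by ring, zpow_mul]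
    norm_num
  have hinv : ((-1 : ℂ) ^ t)⁻¹ = (-1 : ℂ) ^ t := inv_eq_of_mul_eq_one_right hsq
  rw [div_mul_eq_div_div, div_eq_mul_inv (Real.pi : ℂ), hinv]
  ring

lemma key_prod (m : ℕ) (t : ℤ) (z w : ℂ) (h : z + w = 1 + ((m : ℂ) - 1) / 2) :
    Pg m (z + t) * Pg m (w - t) = (-1 : ℂ) ^ (t * (m : ℤ)) * (Pg m z * Pg m w) := by
  unfold Pg
  have hrefl : ∀ c : ℂ, (∏ i ∈ Finset.range m, Complex.Gamma (c - (i : ℂ) / 2)) =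
      ∏ i ∈ Finset.range m, Complex.Gamma (c - ((m - 1 - i : ℕ) : ℂ) / 2) :=
    fun c => (Finset.prod_range_reflect (fun i => Complex.Gamma (c - (i : ℂ) / 2)) m).symm
  rw [hrefl (w - t), hrefl w, ← Finset.prod_mul_distrib, ← Finset.prod_mul_distrib]
  have step : ∀ i ∈ Finset.range m,
      Complex.Gamma (z + (t : ℂ) - (i : ℂ) / 2) *
          Complex.Gamma (w - (t : ℂ) - ((m - 1 - i : ℕ) : ℂ) / 2) =
        (-1 : ℂ) ^ t *
          (Complex.Gamma (z - (i : ℂ) / 2) * Complex.Gamma (w - ((m - 1 - i : ℕ) : ℂ) / 2)) := by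
    intro i hi
    have hi' : i < m := Finset.mem_range.mp hi
    have hc : ((m - 1 - i : ℕ) : ℂ) = (m : ℂ) - 1 - (i : ℂ) := by
      have h1 : m - 1 - i + (i + 1) = m := by omega
      have h2 := congrArg (Nat.cast : ℕ → ℂ) h1
      push_cast at h2
      linear_combination h2
    have e1 : z + (t : ℂ) - (i : ℂ) / 2 = (z - (i : ℂ) / 2) + t := by ring
    have e2 : w - (t : ℂ) - ((m - 1 - i : ℕ) : ℂ) / 2 = 1 - (z - (i : ℂ) / 2) - t := by
      rw [hc]; linear_combination h
    have e3 : w - ((m - 1 - i : ℕ) : ℂ) / 2 = 1 - (z - (i : ℂ) / 2) := by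
      rw [hc]; linear_combination h
    rw [e1, e2, e3, gamma_pair (z - (i : ℂ) / 2) t]
  rw [Finset.prod_congr rfl step, Finset.prod_mul_distrib, Finset.prod_const, Finset.card_range,
    ← zpow_natCast ((-1 : ℂ) ^ t) m, ← zpow_mul]


theorem stmt_14 (n ν : ℕ) (hn : 1 ≤ n) (hν : ν ≤ n) (k : ℤ) (hk : Odd k) (s : ℂ) :
    GammaSiegel ν (s - 1 / 2) *
        GammaSiegel (n - ν) (s - ((ν : ℂ) - 1) / 2 + ((k : ℂ) - 1) / 2) *
        GammaSiegel ν (((n : ℂ) + 1) / 2 - s - (((n : ℂ) - (ν : ℂ)) - 1) / 2) *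
        GammaSiegel (n - ν) (((n : ℂ) + 1) / 2 - s - 1 / 2 - ((k : ℂ) - 1) / 2) =
      (-1 : ℂ) ^ ((n : ℤ) * ((k - 1) / 2)) * GammaSiegel ν (s - (k : ℂ) / 2) *
        GammaSiegel (n - ν) (s - ((ν : ℂ) - 1) / 2) *
        GammaSiegel ν
          (((n : ℂ) + 1) / 2 - s - (((n : ℂ) - (ν : ℂ)) - 1) / 2 + ((k : ℂ) - 1) / 2) *
        GammaSiegel (n - ν) (((n : ℂ) + 1) / 2 - s - 1 / 2) := by
  obtain ⟨t, ht⟩ := hk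
  have hkC : (k : ℂ) = 2 * t + 1 := by rw [ht]; push_cast; ring
  have hdiv : (k - 1) / 2 = t := by omega
  have hlam : ((n - ν : ℕ) : ℂ) = (n : ℂ) - ν := Nat.cast_sub hν
  simp only [GammaSiegel_eq]
  rw [hdiv]
  set u : ℂ := ((n : ℂ) + 1) / 2 - s - (((n : ℂ) - (ν : ℂ)) - 1) / 2 with hu
  set v : ℂ := s - 1 / 2 with hv
  set z : ℂ := s - ((ν : ℂ) - 1) / 2 with hz
  set w : ℂ := ((n : ℂ) + 1) / 2 - s - 1 / 2 with hw
  rw [Pg_congr (n - ν) (show z + ((k : ℂ) - 1) / 2 = z + (t : ℂ) by rw [hkC]; ring),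
    Pg_congr (n - ν) (show w - ((k : ℂ) - 1) / 2 = w - (t : ℂ) by rw [hkC]; ring),
    Pg_congr ν (show s - (k : ℂ) / 2 = v - (t : ℂ) by rw [hv, hkC]; ring),
    Pg_congr ν (show u + ((k : ℂ) - 1) / 2 = u + (t : ℂ) by rw [hkC]; ring)]
  have H1 : Pg ν (u + t) * Pg ν (v - t) = (-1 : ℂ) ^ (t * (ν : ℤ)) * (Pg ν u * Pg ν v) :=
    key_prod ν t u v (by rw [hu, hv]; ring)
  have H2 : Pg (n - ν) (z + t) * Pg (n - ν) (w - t) =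
      (-1 : ℂ) ^ (t * ((n - ν : ℕ) : ℤ)) * (Pg (n - ν) z * Pg (n - ν) w) :=
    key_prod (n - ν) t z w (by rw [hz, hw, hlam]; ring)
  have hsgn : (-1 : ℂ) ^ ((n : ℤ) * t) * (-1 : ℂ) ^ (t * (ν : ℤ)) =
      (-1 : ℂ) ^ (t * ((n - ν : ℕ) : ℤ)) := by
    rw [← zpow_add₀ (by norm_num : (-1 : ℂ) ≠ 0)]
    have he : (n : ℤ) * t + t * (ν : ℤ) = t * ((n - ν : ℕ) : ℤ) + 2 * (t * ν) := by
      have h3 : ((n - ν : ℕ) : ℤ) = (n : ℤ) - ν := by omega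
      rw [h3]; ring
    rw [he, zpow_add₀ (by norm_num : (-1 : ℂ) ≠ 0),
      show ((-1 : ℂ)) ^ (2 * (t * (ν : ℤ))) = 1 by rw [zpow_mul]; norm_num]
    ring
  set Cν : ℂ := (Real.pi : ℂ) ^ (((ν * (ν - 1) : ℕ) : ℂ) / 4) with hCν
  set Cl : ℂ := (Real.pi : ℂ) ^ ((((n - ν) * ((n - ν) - 1) : ℕ) : ℂ) / 4) with hCl
  linear_combination (Cν ^ 2 * Cl ^ 2 * Pg ν u * Pg ν v) * H2 -
    ((-1 : ℂ) ^ ((n : ℤ) * t) * Cν ^ 2 * Cl ^ 2 * Pg (n - ν) z * Pg (n - ν) w) * H1 -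
    (Cν ^ 2 * Cl ^ 2 * Pg ν u * Pg ν v * Pg (n - ν) z * Pg (n - ν) w) * hsgn
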